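/- arXiv:2103.04122 — 5 statements merged into one kernel-verified Lean document; each statement's English description precedes it below -/
import Mathlib

section
/- If K is a convex body in ℝ^d whose centroid is at the origin, then K ⊆ -d·K. -/
/-!
Let `f` be a linear functional with maximum `M` on `K` and let `x ∈ K`. For
`0 ≤ t ≤ M - f x`, the image of `K` under the homothety with centre `x` and ratio
`1 - t / (M - f x)` lies in `K ∩ {t ≤ M - f}`, so the layer-cake formula gives
`∫_K (M - f) ≥ (M - f x) vol K / (d + 1)`. If the centroid is `0` then `∫_K f = 0`, the left side
is `M vol K`, and hence `-f x ≤ d M`. A point `x ∈ K` outside `-d • K` would be separated from it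
by a functional violating this bound.
-/

open MeasureTheory Set Pointwise Module

theorem intervalIntegral.integral_one_sub_div_pow (n : ℕ) (c : ℝ) :
    ∫ t in (0 : ℝ)..c, (1 - t / c) ^ n = c / (n + 1) := by
  rcases eq_or_ne c 0 with rfl | hc
  · simp
  rw [intervalIntegral.integral_comp_div (fun t => (1 - t) ^ n) hc,
    intervalIntegral.integral_comp_sub_left (fun t => t ^ n), integral_pow]
  simp [div_self hc, div_eq_mul_inv]

theorem lintegral_Ioc_one_sub_div_pow (n : ℕ) {c : ℝ} (hc : 0 ≤ c) :
    ∫⁻ t in Ioc 0 c, ENNReal.ofReal ((1 - t / c) ^ n) = ENNReal.ofReal (c / (n + 1)) := by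
  have hcont : Continuous fun t : ℝ => (1 - t / c) ^ n := by fun_prop
  rw [← intervalIntegral.integral_one_sub_div_pow, intervalIntegral.integral_of_le hc,
    ofReal_integral_eq_lintegral_ofReal (hcont.integrableOn_Icc.mono_set Ioc_subset_Icc_self)]
  refine (ae_restrict_iff' measurableSet_Ioc).2 (ae_of_all _ fun t ht => ?_)
  exact pow_nonneg (sub_nonneg.2 (div_le_one_of_le₀ ht.2 hc)) n

theorem Convex.homothety_subset_inter_sub_le {E : Type*} [AddCommGroup E] [Module ℝ E]
    {K : Set E} (hK : Convex ℝ K) {x : E} (hx : x ∈ K) (f : E →ₗ[ℝ] ℝ) {M : ℝ}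
    (hM : ∀ w ∈ K, f w ≤ M) {s : ℝ} (hs0 : 0 ≤ s) (hs1 : s ≤ 1) :
    (1 - s) • x +ᵥ s • K ⊆ K ∩ {w | (1 - s) * (M - f x) ≤ M - f w} := by
  rintro _ ⟨_, ⟨z, hz, rfl⟩, rfl⟩
  refine ⟨hK hx hz (sub_nonneg.2 hs1) hs0 (sub_add_cancel 1 s), ?_⟩
  have := mul_le_mul_of_nonneg_left (hM z hz) hs0
  simp only [mem_ofPred_eq, vadd_eq_add, map_add, map_smul, smul_eq_mul]
  linarith

variable {E : Type*} [NormedAddCommGroup E] [NormedSpace ℝ E] [MeasurableSpace E] [BorelSpace E]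
  [FiniteDimensional ℝ E] (μ : Measure E) [μ.IsAddHaarMeasure]

theorem Convex.measure_inter_le_sub_ge {K : Set E} (hK : Convex ℝ K) {x : E} (hx : x ∈ K)
    (f : E →L[ℝ] ℝ) {M : ℝ} (hM : ∀ w ∈ K, f w ≤ M) {t : ℝ} (ht0 : 0 ≤ t)
    (htc : t ≤ M - f x) :
    ENNReal.ofReal ((1 - t / (M - f x)) ^ finrank ℝ E) * μ K ≤
      μ (K ∩ {w | t ≤ M - f w}) := by
  have hc : 0 ≤ M - f x := sub_nonneg.2 (hM x hx)
  have hs0 : 0 ≤ 1 - t / (M - f x) := sub_nonneg.2 (div_le_one_of_le₀ htc hc)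
  have hst : (1 - (1 - t / (M - f x))) * (M - f x) = t := by
    rcases hc.eq_or_lt with hc | hc
    · rw [← hc, le_antisymm (hc ▸ htc) ht0, mul_zero]
    · rw [sub_sub_cancel, div_mul_cancel₀ t hc.ne']
  have hsub := hK.homothety_subset_inter_sub_le hx f.toLinearMap hM hs0
    (sub_le_self 1 (div_nonneg ht0 hc))
  simp only [ContinuousLinearMap.coe_coe, hst] at hsub
  calc ENNReal.ofReal ((1 - t / (M - f x)) ^ finrank ℝ E) * μ K
      = μ ((1 - (1 - t / (M - f x))) • x +ᵥ (1 - t / (M - f x)) • K) := by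
        rw [measure_vadd, Measure.addHaar_smul_of_nonneg _ hs0]
    _ ≤ μ (K ∩ {w | t ≤ M - f w}) := measure_mono hsub

theorem Convex.sub_div_mul_measureReal_le_setIntegral {K : Set E} (hKc : IsCompact K)
    (hK : Convex ℝ K) {x : E} (hx : x ∈ K) (f : E →L[ℝ] ℝ) {M : ℝ}
    (hM : ∀ w ∈ K, f w ≤ M) :
    (M - f x) / (finrank ℝ E + 1) * μ.real K ≤ ∫ w in K, (M - f w) ∂μ := by
  have hc : 0 ≤ M - f x := sub_nonneg.2 (hM x hx)
  have hKm : MeasurableSet K := hKc.measurableSet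
  have hg : 0 ≤ᵐ[μ.restrict K] fun w => M - f w :=
    (ae_restrict_iff' hKm).2 (ae_of_all _ fun w hw => sub_nonneg.2 (hM w hw))
  have hgi : Integrable (fun w => M - f w) (μ.restrict K) :=
    (continuous_const.sub f.continuous).continuousOn.integrableOn_compact hKc
  have hmeas : Measurable fun t : ℝ => μ.restrict K {w | t ≤ M - f w} :=
    Antitone.measurable fun _ _ hst => measure_mono fun _ hw => hst.trans hw
  rw [← ENNReal.ofReal_le_ofReal_iff (integral_nonneg_of_ae hg),
    ofReal_integral_eq_lintegral_ofReal hgi hg,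
    lintegral_eq_lintegral_meas_le _ hg hgi.aemeasurable]
  calc ENNReal.ofReal ((M - f x) / (finrank ℝ E + 1) * μ.real K)
      = ∫⁻ t in Ioc 0 (M - f x),
          ENNReal.ofReal ((1 - t / (M - f x)) ^ finrank ℝ E) * μ K := by
        rw [lintegral_mul_const _ (by fun_prop), lintegral_Ioc_one_sub_div_pow _ hc,
          ENNReal.ofReal_mul (div_nonneg hc (by positivity)),
          ofReal_measureReal hKc.measure_lt_top.ne]
    _ ≤ ∫⁻ t in Ioc 0 (M - f x), μ.restrict K {w | t ≤ M - f w} := by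
        refine setLIntegral_mono hmeas fun t ht => ?_
        rw [Measure.restrict_apply' hKm, inter_comm]
        exact hK.measure_inter_le_sub_ge μ hx f hM ht.1.le ht.2
    _ ≤ ∫⁻ t in Ioi 0, μ.restrict K {w | t ≤ M - f w} :=
        lintegral_mono_set Ioc_subset_Ioi_self

theorem Convex.neg_apply_le_finrank_mul_of_setAverage_eq_zero {K : Set E} (hKc : IsCompact K)
    (hK : Convex ℝ K) (hKint : (interior K).Nonempty) (hcentroid : ⨍ w in K, w ∂μ = 0)
    {x : E} (hx : x ∈ K) (f : E →L[ℝ] ℝ) {M : ℝ} (hM : ∀ w ∈ K, f w ≤ M) :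
    -f x ≤ finrank ℝ E * M := by
  have hK0 : 0 < μ.real K :=
    ENNReal.toReal_pos (μ.measure_pos_of_nonempty_interior hKint).ne' hKc.measure_lt_top.ne
  have hint : ∫ w in K, w ∂μ = 0 := by
    rwa [setAverage_eq, smul_eq_zero, or_iff_right (inv_ne_zero hK0.ne')] at hcentroid
  have hintf : ∫ w in K, f w ∂μ = 0 := by
    rw [← map_zero f, ← hint]
    exact f.integral_comp_comm (continuous_id.continuousOn.integrableOn_compact hKc)
  have hbound := hK.sub_div_mul_measureReal_le_setIntegral μ hKc hx f hM
  have hM_int : Integrable (fun _ : E => M) (μ.restrict K) :=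
    integrableOn_const hKc.measure_lt_top.ne
  have hf_int : Integrable (fun w => f w) (μ.restrict K) :=
    f.continuous.continuousOn.integrableOn_compact hKc
  rw [integral_sub hM_int hf_int, hintf, setIntegral_const, smul_eq_mul, sub_zero, mul_comm _ M,
    mul_le_mul_iff_left₀ hK0, div_le_iff₀ (by positivity)] at hbound
  linarith

theorem stmt_0 (d : ℕ) (K : Set (EuclideanSpace ℝ (Fin d)))
    (hKcompact : IsCompact K) (hKconv : Convex ℝ K)
    (hKint : (interior K).Nonempty)
    (hcentroid : ⨍ x in K, x ∂volume = 0) :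
    K ⊆ (-(d : ℝ)) • K := by
  intro x hx
  by_contra hnot
  obtain ⟨f, u, hfx, hfK⟩ := geometric_hahn_banach_point_closed
    (hKconv.smul _) (hKcompact.smul _).isClosed hnot
  obtain ⟨w₀, hw₀, hmax⟩ := hKcompact.exists_isMaxOn ⟨x, hx⟩ f.continuous.continuousOn
  have hbound := hKconv.neg_apply_le_finrank_mul_of_setAverage_eq_zero volume hKcompact hKint
    hcentroid hx f hmax
  have hw₀u := hfK _ (smul_mem_smul_set hw₀)
  rw [finrank_euclideanSpace_fin] at hbound
  rw [map_smul, smul_eq_mul] at hw₀u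
  linarith
end

section
/- Let K be a convex body in ℝ^d and let E be its John ellipsoid (the largest-volume ellipsoid contained in K), centered at z. Then (K − z)° ⊆ −d·(K − z)°. -/
/-!
If the maximal-volume ellipsoid in the convex body `K` is `z + L(B)`, with `B` the unit ball,
then `L⁻¹(K - z) ⊆ d • B`. Otherwise `L⁻¹(K - z)` contains a point `h • u` with `‖u‖ = 1` and
`h > d`, and the convex hull of `B ∪ {h • u}` contains the ellipsoid centred at `σ • u` with
semi-axis `1 + σ` along `u` and `√(1 - ε)` across it, where `σ = ε (h - 1) / 2`. For a suitable
small `ε > 0` its volume ratio `(1 + σ) (1 - ε)^((d - 1) / 2)` to `B` exceeds `1`, a contradiction.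
Since `B` is symmetric, `L⁻¹(K - z) ⊆ d • B` gives `-(K - z) / d ⊆ K - z`, and taking polars
turns this into `(K - z)° ⊆ -d (K - z)°`.
-/

open MeasureTheory Set Pointwise

/-- `E` is an ellipsoid in `ℝ^d` centered at `z`: the image of the closed unit
ball under an invertible linear map, translated to `z`. -/
def IsEllipsoidAt {d : ℕ} (E : Set (EuclideanSpace ℝ (Fin d)))
    (z : EuclideanSpace ℝ (Fin d)) : Prop :=
  ∃ L : EuclideanSpace ℝ (Fin d) ≃ₗ[ℝ] EuclideanSpace ℝ (Fin d),
    E = (fun x => z + L x) '' Metric.closedBall 0 1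

/-- `E` is an ellipsoid (centered at some point). -/
def IsEllipsoid {d : ℕ} (E : Set (EuclideanSpace ℝ (Fin d))) : Prop :=
  ∃ z, IsEllipsoidAt E z

theorem LinearMap.det_id_add_smulRight {R M : Type*} [CommRing R] [AddCommGroup M] [Module R M]
    [Module.Free R M] [Module.Finite R M] (f : M →ₗ[R] R) (w : M) :
    LinearMap.det (LinearMap.id + f.smulRight w) = 1 + f w := by
  classical
  let b := Module.Free.chooseBasis R M
  have hmat : LinearMap.toMatrix b b (LinearMap.id + f.smulRight w)
      = 1 + Matrix.replicateCol Unit (b.repr w) * Matrix.replicateRow Unit (fun j => f (b j)) := by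
    ext i j
    simp [LinearMap.toMatrix_apply, Matrix.one_apply, Matrix.mul_apply, mul_comm,
      Finsupp.single_apply, eq_comm]
  rw [← LinearMap.det_toMatrix b, hmat, Matrix.det_one_add_replicateCol_mul_replicateRow]
  conv_rhs => rw [← b.sum_repr w, map_sum]
  simp only [dotProduct, map_smul, smul_eq_mul, mul_comm]

theorem exists_one_lt_sq_mul_pow {n : ℕ} {h : ℝ} (hh : n + 1 < h) :
    ∃ ε, 0 < ε ∧ ε < 1 ∧ 1 < (1 + ε * (h - 1) / 2) ^ 2 * (1 - ε) ^ n := by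
  have hn : (0 : ℝ) ≤ n := n.cast_nonneg
  have hh₀ : 0 < h := by linarith
  -- chosen so that Bernoulli's lower bound `(1 + ε (h - 1)) (1 - n ε)` is `1 + ε ^ 2 (h + n)`
  set ε := (h - (n + 1)) / (h * (n + 1))
  have hε : ε * (h * (n + 1)) = h - (n + 1) := div_mul_cancel₀ _ (by positivity)
  have hε₀ : 0 < ε := div_pos (by linarith) (by positivity)
  have hε₁ : ε < 1 := by
    rw [div_lt_one (by positivity)]
    nlinarith
  refine ⟨ε, hε₀, hε₁, ?_⟩
  have bernoulli : 1 - n * ε ≤ (1 - ε) ^ n := by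
    simpa [sub_eq_add_neg] using one_add_mul_le_pow (by linarith : (-2 : ℝ) ≤ -ε) n
  have hlin : 0 ≤ 1 + ε * (h - 1) := by nlinarith
  calc 1 < 1 + ε ^ 2 * (h + n) := by nlinarith [pow_pos hε₀ 2]
    _ = (1 + ε * (h - 1)) * (1 - n * ε) := by linear_combination ε * hε
    _ ≤ (1 + ε * (h - 1)) * (1 - ε) ^ n := mul_le_mul_of_nonneg_left bernoulli hlin
    _ ≤ (1 + ε * (h - 1) / 2) ^ 2 * (1 - ε) ^ n := by
      gcongr
      nlinarith [sq_nonneg (ε * (h - 1))]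

section Stretch

variable {E : Type*} [NormedAddCommGroup E] [InnerProductSpace ℝ E]

noncomputable def stretch (u : E) (a b : ℝ) : E →ₗ[ℝ] E :=
  b • LinearMap.id + (a - b) • (innerₗ E u).smulRight u

theorem stretch_apply (u : E) (a b : ℝ) (x : E) :
    stretch u a b x = b • x + ((a - b) * inner ℝ u x) • u := by
  simp [stretch, mul_smul]

theorem det_stretch [FiniteDimensional ℝ E] {n : ℕ} (hE : Module.finrank ℝ E = n + 1) {u : E}
    (hu : ‖u‖ = 1) (a : ℝ) {b : ℝ} (hb : b ≠ 0) :
    LinearMap.det (stretch u a b) = a * b ^ n := by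
  have h : stretch u a b = b • (LinearMap.id + (((a - b) / b) • innerₗ E u).smulRight u) := by
    ext x
    simp only [stretch_apply, LinearMap.smul_apply, LinearMap.add_apply, LinearMap.id_apply,
      LinearMap.smulRight_apply, innerₗ_apply_apply, smul_add, smul_smul, smul_eq_mul]
    field_simp
  rw [h, LinearMap.det_smul, LinearMap.det_id_add_smulRight, hE]
  simp only [LinearMap.smul_apply, innerₗ_apply_apply, real_inner_self_eq_norm_sq, hu, smul_eq_mul]
  rw [pow_succ]
  field_simp
  ring

theorem norm_sq_smul_add_smul_sub_inner_smul {u : E} (hu : ‖u‖ = 1) (r b : ℝ) (x : E) :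
    ‖r • u + b • (x - inner ℝ u x • u)‖ ^ 2 = r ^ 2 + b ^ 2 * (‖x‖ ^ 2 - inner ℝ u x ^ 2) := by
  have horth : inner ℝ (r • u) (b • (x - inner ℝ u x • u)) = 0 := by
    rw [real_inner_smul_left, real_inner_smul_right, inner_sub_right, real_inner_smul_right,
      real_inner_self_eq_norm_sq, hu]
    ring
  rw [norm_add_sq_real, horth, norm_smul, norm_smul, mul_pow, mul_pow, norm_sub_sq_real,
    norm_smul, real_inner_smul_right, real_inner_comm, hu]
  simp only [Real.norm_eq_abs, mul_pow, sq_abs]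
  ring

theorem Convex.add_stretch_mem {S : Set E} (hS : Convex ℝ S)
    (hB : Metric.closedBall (0 : E) 1 ⊆ S) {u : E} (hu : ‖u‖ = 1) {h : ℝ} (hhu : h • u ∈ S)
    {ε b : ℝ} (hε₀ : 0 ≤ ε) (hε₁ : ε < 1) (hb : b ^ 2 = 1 - ε) {x : E} (hx : ‖x‖ ≤ 1) :
    (ε * (h - 1) / 2) • u + stretch u (1 + ε * (h - 1) / 2) b x ∈ S := by
  set s := inner ℝ u x
  have hs : |s| ≤ 1 := (abs_real_inner_le_norm u x).trans (by rw [hu, one_mul]; exact hx)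
  obtain ⟨hs₁, hs₂⟩ := abs_le.mp hs
  -- the point is `t • (h • u) + (1 - t) • c` with `c` in the ball
  set t := ε * (1 + s) / 2
  have ht₀ : 0 ≤ t := div_nonneg (mul_nonneg hε₀ (by linarith)) zero_le_two
  have ht₁ : 0 < 1 - t := by
    have : ε * (1 + s) ≤ ε * 2 := mul_le_mul_of_nonneg_left (by linarith) hε₀
    simp only [t]
    linarith
  have hw : ‖(s - t) • u + b • (x - s • u)‖ ≤ 1 - t := by
    have hsq : ‖(s - t) • u + b • (x - s • u)‖ ^ 2 ≤ (1 - t) ^ 2 := by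
      rw [norm_sq_smul_add_smul_sub_inner_smul hu, hb]
      have hx₂ : ‖x‖ ^ 2 ≤ 1 := pow_le_one₀ (norm_nonneg x) hx
      have ht : (1 - t) ^ 2 - (s - t) ^ 2 = (1 - ε) * (1 - s ^ 2) := by simp only [t]; ring
      nlinarith [mul_le_mul_of_nonneg_left hx₂ (by linarith : (0 : ℝ) ≤ 1 - ε)]
    exact (abs_le_of_sq_le_sq' hsq ht₁.le).2
  have hc : (1 - t)⁻¹ • ((s - t) • u + b • (x - s • u)) ∈ Metric.closedBall (0 : E) 1 := by
    rw [mem_closedBall_zero_iff, norm_smul, Real.norm_eq_abs, abs_inv, abs_of_pos ht₁]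
    exact inv_mul_le_one_of_le₀ hw ht₁.le
  convert hS hhu (hB hc) ht₀ ht₁.le (by ring) using 1
  rw [smul_inv_smul₀ ht₁.ne', stretch_apply]
  simp only [t]
  module

theorem Convex.exists_image_closedBall_subset [FiniteDimensional ℝ E] {n : ℕ}
    (hE : Module.finrank ℝ E = n + 1) {S : Set E} (hS : Convex ℝ S)
    (hB : Metric.closedBall (0 : E) 1 ⊆ S) {y : E} (hy : y ∈ S) (hny : n + 1 < ‖y‖) :
    ∃ (c : E) (M : E →ₗ[ℝ] E), 1 < |LinearMap.det M| ∧
      (fun x => c + M x) '' Metric.closedBall 0 1 ⊆ S := by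
  set h := ‖y‖
  have hy₀ : y ≠ 0 := norm_pos_iff.mp (lt_of_le_of_lt (by positivity) hny)
  set u := h⁻¹ • y
  have hu : ‖u‖ = 1 := norm_smul_inv_norm hy₀
  have hhu : h • u = y := smul_inv_smul₀ (norm_ne_zero_iff.mpr hy₀) y
  obtain ⟨ε, hε₀, hε₁, hgain⟩ := exists_one_lt_sq_mul_pow hny
  set a := 1 + ε * (h - 1) / 2
  set b := √(1 - ε)
  have hb : b ^ 2 = 1 - ε := Real.sq_sqrt (by linarith)
  have hb₀ : 0 < b := Real.sqrt_pos.mpr (by linarith)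
  refine ⟨(ε * (h - 1) / 2) • u, stretch u a b, ?_, ?_⟩
  · rw [det_stretch hE hu a hb₀.ne']
    have hsq : (a * b ^ n) ^ 2 = a ^ 2 * (1 - ε) ^ n := by
      rw [mul_pow, ← pow_mul, mul_comm n 2, pow_mul, hb]
    exact one_lt_sq_iff_one_lt_abs _ |>.mp (hsq ▸ hgain)
  · rintro _ ⟨x, hx, rfl⟩
    exact hS.add_stretch_mem hB hu (hhu ▸ hy) hε₀.le hε₁ hb (mem_closedBall_zero_iff.mp hx)

end Stretch

theorem MeasureTheory.Measure.addHaar_image_add_linearMap {E : Type*} [NormedAddCommGroup E]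
    [NormedSpace ℝ E] [MeasurableSpace E] [BorelSpace E] [FiniteDimensional ℝ E] (μ : Measure E)
    [μ.IsAddHaarMeasure] (z : E) (f : E →ₗ[ℝ] E) (s : Set E) :
    μ ((fun x => z + f x) '' s) = ENNReal.ofReal |LinearMap.det f| * μ s := by
  rw [show (fun x => z + f x) = (z + ·) ∘ f from rfl, image_comp, image_add_left,
    measure_preimage_add, Measure.addHaar_image_linearMap]

section MaxVolume

variable {d : ℕ} {K : Set (EuclideanSpace ℝ (Fin d))} {z : EuclideanSpace ℝ (Fin d)}
  {L : EuclideanSpace ℝ (Fin d) ≃ₗ[ℝ] EuclideanSpace ℝ (Fin d)}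

theorem abs_det_le_of_forall_volume_le
    (hmax : ∀ E' : Set (EuclideanSpace ℝ (Fin d)), IsEllipsoid E' → E' ⊆ K →
      volume E' ≤ volume ((fun x => z + L x) '' Metric.closedBall 0 1))
    {z' : EuclideanSpace ℝ (Fin d)} {M : EuclideanSpace ℝ (Fin d) →ₗ[ℝ] EuclideanSpace ℝ (Fin d)}
    (hM : (fun x => z' + M x) '' Metric.closedBall 0 1 ⊆ K) :
    |LinearMap.det M| ≤ |LinearMap.det (L : EuclideanSpace ℝ (Fin d) →ₗ[ℝ] _)| := by
  by_cases hdet : LinearMap.det M = 0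
  · rw [hdet, abs_zero]
    exact abs_nonneg _
  have hvol := hmax ((fun x => z' + M x) '' Metric.closedBall 0 1)
    ⟨z', M.equivOfDetNeZero hdet, rfl⟩ hM
  have hball₀ : volume (Metric.closedBall (0 : EuclideanSpace ℝ (Fin d)) 1) ≠ 0 :=
    (Metric.measure_closedBall_pos _ _ one_pos).ne'
  have hball_top : volume (Metric.closedBall (0 : EuclideanSpace ℝ (Fin d)) 1) ≠ ⊤ :=
    measure_closedBall_lt_top.ne
  rw [show (fun x => z + L x) = fun x => z + (L : _ →ₗ[ℝ] _) x from rfl,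
    Measure.addHaar_image_add_linearMap, Measure.addHaar_image_add_linearMap,
    ENNReal.mul_le_mul_iff_left hball₀ hball_top] at hvol
  exact (ENNReal.ofReal_le_ofReal_iff (abs_nonneg _)).mp hvol

theorem norm_symm_sub_le_of_forall_volume_le (hd : d ≠ 0) (hK : Convex ℝ K)
    (hEK : (fun x => z + L x) '' Metric.closedBall 0 1 ⊆ K)
    (hmax : ∀ E' : Set (EuclideanSpace ℝ (Fin d)), IsEllipsoid E' → E' ⊆ K →
      volume E' ≤ volume ((fun x => z + L x) '' Metric.closedBall 0 1))
    {x : EuclideanSpace ℝ (Fin d)} (hx : x ∈ K) :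
    ‖L.symm (x - z)‖ ≤ d := by
  obtain ⟨n, rfl⟩ := Nat.exists_eq_add_one_of_ne_zero hd
  by_contra! hlt
  obtain ⟨c, M, hM, hsub⟩ :=
    ((hK.translate_preimage_right z).linear_preimage L.toLinearMap).exists_image_closedBall_subset
      finrank_euclideanSpace_fin (fun w hw => hEK ⟨w, hw, rfl⟩)
      (show L.symm (x - z) ∈ _ by simpa using hx) (by exact_mod_cast hlt)
  have hdet := abs_det_le_of_forall_volume_le hmax (z' := z + L c) (M := L.toLinearMap ∘ₗ M)
    (by rintro _ ⟨v, hv, rfl⟩; simpa [add_assoc] using hsub ⟨v, hv, rfl⟩)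
  have hL : 0 < |LinearMap.det (L : EuclideanSpace ℝ (Fin (n + 1)) →ₗ[ℝ] _)| :=
    abs_pos.mpr (LinearEquiv.isUnit_det' L).ne_zero
  rw [LinearMap.det_comp, abs_mul] at hdet
  nlinarith

end MaxVolume

theorem polar_subset_smul_polar {E : Type*} [NormedAddCommGroup E] [InnerProductSpace ℝ E]
    {A : Set E} {r : ℝ} (hr : r ≠ 0) (hA : r⁻¹ • A ⊆ A) :
    {p : E | ∀ x ∈ A, inner ℝ p x ≤ (1 : ℝ)} ⊆ r • {p : E | ∀ x ∈ A, inner ℝ p x ≤ (1 : ℝ)} := by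
  intro p hp
  refine ⟨r⁻¹ • p, fun x hx => ?_, smul_inv_smul₀ hr p⟩
  rw [real_inner_smul_left, ← real_inner_smul_right]
  exact hp _ (hA (smul_mem_smul_set hx))

theorem stmt_2_general (d : ℕ) (K E : Set (EuclideanSpace ℝ (Fin d)))
    (z : EuclideanSpace ℝ (Fin d))
    (hKconv : Convex ℝ K)
    (hE : IsEllipsoidAt E z) (hEK : E ⊆ K)
    (hmax : ∀ E' : Set (EuclideanSpace ℝ (Fin d)), IsEllipsoid E' → E' ⊆ K →
      volume E' ≤ volume E) :
    {p : EuclideanSpace ℝ (Fin d) | ∀ x ∈ (fun y => y - z) '' K, inner ℝ p x ≤ (1 : ℝ)} ⊆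
      (-(d : ℝ)) •
        {p : EuclideanSpace ℝ (Fin d) | ∀ x ∈ (fun y => y - z) '' K, inner ℝ p x ≤ (1 : ℝ)} := by
  obtain rfl | hd := eq_or_ne d 0
  · exact fun p hp => ⟨p, hp, Subsingleton.elim _ _⟩
  obtain ⟨L, rfl⟩ := hE
  refine polar_subset_smul_polar (by simpa using hd) ?_
  rintro _ ⟨_, ⟨x, hx, rfl⟩, rfl⟩
  have hnorm := norm_symm_sub_le_of_forall_volume_le hd hKconv hEK hmax hx
  refine ⟨z + L ((-(d : ℝ))⁻¹ • L.symm (x - z)), hEK ⟨_, ?_, rfl⟩, by simp⟩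
  rw [mem_closedBall_zero_iff, norm_smul, norm_inv, norm_neg, Real.norm_natCast]
  exact inv_mul_le_one_of_le₀ hnorm (Nat.cast_nonneg d)

theorem stmt_2 (d : ℕ) (K E : Set (EuclideanSpace ℝ (Fin d)))
    (z : EuclideanSpace ℝ (Fin d))
    (hKcompact : IsCompact K) (hKconv : Convex ℝ K)
    (hKint : (interior K).Nonempty)
    (hE : IsEllipsoidAt E z) (hEK : E ⊆ K)
    (hmax : ∀ E' : Set (EuclideanSpace ℝ (Fin d)), IsEllipsoid E' → E' ⊆ K →
      volume E' ≤ volume E) :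
    {p : EuclideanSpace ℝ (Fin d) | ∀ x ∈ (fun y => y - z) '' K, inner ℝ p x ≤ (1 : ℝ)} ⊆
      (-(d : ℝ)) •
        {p : EuclideanSpace ℝ (Fin d) | ∀ x ∈ (fun y => y - z) '' K, inner ℝ p x ≤ (1 : ℝ)} :=
  stmt_2_general d K E z hKconv hE hEK hmax
end

section
/- Let S be a simplex of maximal volume contained in a convex body Q ⊆ ℝ^d, and let v be the centroid of S. Then Q ⊆ −d(S − v) + v. -/
/-!
Replacing the vertex `b i` of a simplex by a point `x` is the affine map
`y ↦ y + λᵢ(y) • (x - b i)`, where `λᵢ` is the `i`-th barycentric coordinate; its linear part is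
the identity plus a rank-one map, with determinant `λᵢ(x)`. So the new simplex has `|λᵢ(x)|` times
the volume of the old one, and maximality forces `λᵢ(x) ≤ 1` for every `x ∈ Q`. Conversely, if all
`λᵢ(x) ≤ 1` then `v - (x - v) / d` has barycentric coordinates `(1 - λᵢ(x)) / d ≥ 0`, so it lies in
`S`, and the homothety of centre `v` and ratio `-d` maps it to `x`.
-/

open MeasureTheory Set Pointwise

theorem LinearMap.det_id_add_smulRight_s3 {𝕜 M : Type*} [Field 𝕜] [AddCommGroup M] [Module 𝕜 M]
    [FiniteDimensional 𝕜 M] (φ : M →ₗ[𝕜] 𝕜) (c : M) :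
    LinearMap.det (LinearMap.id + φ.smulRight c) = 1 + φ c := by
  let b := Module.finBasis 𝕜 M
  rw [← LinearMap.det_toMatrix b, map_add, LinearMap.toMatrix_id, LinearMap.toMatrix_smulRight,
    Matrix.vecMulVec_eq Unit, Matrix.det_one_add_replicateCol_mul_replicateRow]
  conv_rhs => rw [← b.sum_repr c]
  simp only [dotProduct, Function.comp_apply, map_sum, map_smul, smul_eq_mul, mul_comm]

theorem MeasureTheory.Measure.addHaar_image_affineMap {E : Type*} [NormedAddCommGroup E]
    [NormedSpace ℝ E] [MeasurableSpace E] [BorelSpace E] [FiniteDimensional ℝ E] (μ : Measure E)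
    [μ.IsAddHaarMeasure] (f : E →ᵃ[ℝ] E) (s : Set E) :
    μ (f '' s) = ENNReal.ofReal |LinearMap.det f.linear| * μ s := by
  have hf : ⇑f = (f 0 +ᵥ ·) ∘ f.linear := funext fun y => (congrFun f.decomp y).trans (add_comm _ _)
  rw [hf, image_comp, image_vadd, measure_vadd, addHaar_image_linearMap]

namespace AffineBasis

section Field

variable {ι k V : Type*} [Field k] [AddCommGroup V] [Module k V]

noncomputable def replaceVertex (b : AffineBasis ι k V) (i : ι) (x : V) : V →ᵃ[k] V :=
  AffineMap.id k V + (LinearMap.toSpanSingleton k V (x - b i)).toAffineMap.comp (b.coord i)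

variable (b : AffineBasis ι k V) (i : ι) (x : V)

theorem replaceVertex_apply (y : V) : b.replaceVertex i x y = y + b.coord i y • (x - b i) := rfl

theorem replaceVertex_linear :
    (b.replaceVertex i x).linear = LinearMap.id + (b.coord i).linear.smulRight (x - b i) :=
  rfl

theorem det_replaceVertex_linear [FiniteDimensional k V] :
    LinearMap.det (b.replaceVertex i x).linear = b.coord i x := by
  rw [replaceVertex_linear, LinearMap.det_id_add_smulRight_s3, ← vsub_eq_sub,
    AffineMap.linearMap_vsub, coord_apply_eq, vsub_eq_sub]
  ring

theorem replaceVertex_comp [DecidableEq ι] : b.replaceVertex i x ∘ b = Function.update b i x := by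
  ext j : 1
  rcases eq_or_ne j i with rfl | hj
  · simp [replaceVertex_apply]
  · simp [replaceVertex_apply, hj, b.coord_apply_ne hj.symm]

theorem affineIndependent_update [FiniteDimensional k V] [DecidableEq ι] (hx : b.coord i x ≠ 0) :
    AffineIndependent k (Function.update b i x) := by
  have hunit : IsUnit (b.replaceVertex i x).linear := by
    rw [LinearMap.isUnit_iff_isUnit_det, det_replaceVertex_linear]
    exact hx.isUnit
  rw [← b.replaceVertex_comp]
  exact b.ind.map' _ ((b.replaceVertex i x).linear_injective_iff.mp
    (Module.End.isUnit_iff _ |>.mp hunit).injective)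

end Field

section OrderedField

variable {k V : Type*} [Field k] [LinearOrder k] [IsStrictOrderedRing k] [AddCommGroup V]
  [Module k V]

theorem mem_homothety_centroid_convexHull {n : ℕ} (b : AffineBasis (Fin (n + 1)) k V) {x : V}
    (hx : ∀ i, b.coord i x ≤ 1) :
    x ∈ AffineMap.homothety (Finset.univ.centroid k b) (-n : k) '' convexHull k (range b) := by
  set v := Finset.univ.centroid k b
  have hv (i) : b.coord i v = ((n : k) + 1)⁻¹ := by
    rw [b.coord_apply_centroid (Finset.mem_univ i)]
    simp
  obtain rfl | hn := eq_or_ne n 0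
  · -- a one-point affine basis has the single coordinate `1` everywhere
    have hxv : x = v := b.ext_elem fun i => by
      simp [Fin.eq_zero i, hv]
    refine ⟨x, ?_, by simp [hxv]⟩
    rw [b.convexHull_eq_nonneg_coord]
    intro i
    rw [hxv, hv]
    positivity
  · have hn' : (n : k) ≠ 0 := Nat.cast_ne_zero.mpr hn
    refine ⟨AffineMap.homothety v (-(n : k)⁻¹) x, ?_, ?_⟩
    · rw [b.convexHull_eq_nonneg_coord]
      intro i
      have hcoord : b.coord i (AffineMap.homothety v (-(n : k)⁻¹) x) = (1 - b.coord i x) / n := by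
        rw [AffineMap.homothety_eq_lineMap, AffineMap.apply_lineMap, AffineMap.lineMap_apply_ring,
          hv]
        field_simp
        ring
      rw [hcoord]
      exact div_nonneg (sub_nonneg.mpr (hx i)) (Nat.cast_nonneg n)
    · rw [← AffineMap.homothety_mul_apply, neg_mul_neg, mul_inv_cancel₀ hn',
        AffineMap.homothety_one, AffineMap.id_apply]

end OrderedField

section AddHaar

variable {E : Type*} [NormedAddCommGroup E] [NormedSpace ℝ E] [MeasurableSpace E]
  [FiniteDimensional ℝ E] (μ : Measure E) [μ.IsAddHaarMeasure]

theorem addHaar_convexHull_update [BorelSpace E] {ι : Type*} [DecidableEq ι]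
    (b : AffineBasis ι ℝ E) (i : ι) (x : E) :
    μ (convexHull ℝ (range (Function.update b i x))) =
      ENNReal.ofReal |b.coord i x| * μ (convexHull ℝ (range b)) := by
  rw [← b.replaceVertex_comp, range_comp, ← AffineMap.image_convexHull,
    Measure.addHaar_image_affineMap, det_replaceVertex_linear]

theorem addHaar_convexHull_pos {ι : Type*} [Finite ι] (b : AffineBasis ι ℝ E) :
    0 < μ (convexHull ℝ (range b)) :=
  μ.measure_pos_of_nonempty_interior (interior_convexHull_nonempty_iff_affineSpan_eq_top.mpr b.tot)

theorem abs_coord_le_one_of_addHaar_convexHull_maximal [BorelSpace E] {ι : Type*} [Finite ι]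
    (b : AffineBasis ι ℝ E) {Q : Set E} (hQ : Convex ℝ Q) (hbQ : convexHull ℝ (range b) ⊆ Q)
    (hmax : ∀ q : ι → E, AffineIndependent ℝ q → convexHull ℝ (range q) ⊆ Q →
      μ (convexHull ℝ (range q)) ≤ μ (convexHull ℝ (range b)))
    {x : E} (hx : x ∈ Q) (i : ι) : |b.coord i x| ≤ 1 := by
  classical
  by_contra! hbig
  have hsub : convexHull ℝ (range (Function.update b i x)) ⊆ Q := by
    refine convexHull_min ?_ hQ
    rintro _ ⟨j, rfl⟩
    rcases eq_or_ne j i with rfl | hj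
    · simpa using hx
    · simpa [hj] using hbQ (subset_convexHull ℝ _ (mem_range_self j))
  have hcoord : b.coord i x ≠ 0 := abs_pos.mp (one_pos.trans hbig)
  refine (hmax _ (b.affineIndependent_update i x hcoord) hsub).not_gt ?_
  rw [addHaar_convexHull_update]
  have hfin : μ (convexHull ℝ (range b)) ≠ ⊤ :=
    ((finite_range b).isCompact_convexHull (𝕜 := ℝ)).measure_lt_top.ne
  simpa only [one_mul] using ENNReal.mul_lt_mul_left (addHaar_convexHull_pos μ b).ne' hfin
    (ENNReal.one_lt_ofReal.mpr hbig)

theorem subset_homothety_centroid_convexHull_of_addHaar_maximal [BorelSpace E] {n : ℕ}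
    (b : AffineBasis (Fin (n + 1)) ℝ E) {Q : Set E} (hQ : Convex ℝ Q)
    (hbQ : convexHull ℝ (range b) ⊆ Q)
    (hmax : ∀ q : Fin (n + 1) → E, AffineIndependent ℝ q → convexHull ℝ (range q) ⊆ Q →
      μ (convexHull ℝ (range q)) ≤ μ (convexHull ℝ (range b))) :
    Q ⊆ AffineMap.homothety (Finset.univ.centroid ℝ b) (-n : ℝ) '' convexHull ℝ (range b) :=
  fun _ hx => b.mem_homothety_centroid_convexHull fun i =>
    (le_abs_self _).trans (abs_coord_le_one_of_addHaar_convexHull_maximal μ b hQ hbQ hmax hx i)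

end AddHaar

end AffineBasis

theorem stmt_3_general (d : ℕ) (Q : Set (EuclideanSpace ℝ (Fin d)))
    (hQconv : Convex ℝ Q)
    (p : Fin (d + 1) → EuclideanSpace ℝ (Fin d))
    (hp : AffineIndependent ℝ p)
    (hSQ : convexHull ℝ (Set.range p) ⊆ Q)
    (hmax : ∀ q : Fin (d + 1) → EuclideanSpace ℝ (Fin d), AffineIndependent ℝ q →
      convexHull ℝ (Set.range q) ⊆ Q →
      volume (convexHull ℝ (Set.range q)) ≤ volume (convexHull ℝ (Set.range p)))
    (v : EuclideanSpace ℝ (Fin d)) (hv : v = Finset.univ.centroid ℝ p) :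
    Q ⊆ (fun x => (-(d : ℝ)) • (x - v) + v) '' convexHull ℝ (Set.range p) := by
  have hspan : affineSpan ℝ (range p) = ⊤ := by
    rw [hp.affineSpan_eq_top_iff_card_eq_finrank_add_one, finrank_euclideanSpace_fin,
      Fintype.card_fin]
  subst hv
  exact AffineBasis.subset_homothety_centroid_convexHull_of_addHaar_maximal volume ⟨p, hp, hspan⟩
    hQconv hSQ hmax

theorem stmt_3 (d : ℕ) (Q : Set (EuclideanSpace ℝ (Fin d)))
    (hQcompact : IsCompact Q) (hQconv : Convex ℝ Q)
    (hQint : (interior Q).Nonempty)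
    (p : Fin (d + 1) → EuclideanSpace ℝ (Fin d))
    (hp : AffineIndependent ℝ p)
    (hSQ : convexHull ℝ (Set.range p) ⊆ Q)
    (hmax : ∀ q : Fin (d + 1) → EuclideanSpace ℝ (Fin d), AffineIndependent ℝ q →
      convexHull ℝ (Set.range q) ⊆ Q →
      volume (convexHull ℝ (Set.range q)) ≤ volume (convexHull ℝ (Set.range p)))
    (v : EuclideanSpace ℝ (Fin d)) (hv : v = Finset.univ.centroid ℝ p) :
    Q ⊆ (fun x => (-(d : ℝ)) • (x - v) + v) '' convexHull ℝ (Set.range p) :=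
  stmt_3_general d Q hQconv p hp hSQ hmax v hv
end

section
/- Let Q ⊆ ℝ^d be a convex body with 0 ∈ Q and Q ⊆ −λQ for some λ > 0, let S ⊆ Q be a simplex of maximal volume with centroid v, and let Q' be any set of extreme points of Q whose convex hull contains both all vertices of S and a boundary point of Q on the ray from 0 in direction −v. Then v ∈ −λ·conv(Q'). -/
/-!
Since `Q ⊆ -λQ` and `Q` has interior points, `0` is an interior point of `Q`, and `-v/λ ∈ Q`
because the centroid `v` lies in `S ⊆ Q`. The ray from `0` through `-v/λ` therefore stays in the
interior of `Q` strictly before `-v/λ`, so the boundary point `y = t • (-v)` has `t ≥ 1/λ`. Hence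
`-v/λ` lies on the segment from `v` to `y`, both of which lie in the convex set `conv(Q')`.
-/

open MeasureTheory Set Pointwise

theorem Finset.centroid_mem_convexHull_image {R E ι : Type*} [Field R] [LinearOrder R]
    [IsStrictOrderedRing R] [AddCommGroup E] [Module R E] (s : Finset ι) (hs : s.Nonempty)
    (p : ι → E) : s.centroid R p ∈ convexHull R (p '' (s : Set ι)) := by
  rw [s.centroid_eq_centerMass hs]
  refine s.centerMass_mem_convexHull (fun i _ => ?_) ?_ fun i hi => Set.mem_image_of_mem p hi
  · simp only [Finset.centroidWeights_apply, inv_nonneg, Nat.cast_nonneg]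
  · rw [s.sum_centroidWeights_eq_one_of_nonempty R hs]
    exact one_pos

section Convex

variable {E : Type*} [AddCommGroup E] [Module ℝ E]

theorem Convex.smul_mem_of_mem_uIcc {C : Set E} (hC : Convex ℝ C) {x : E} {a b c : ℝ}
    (ha : a • x ∈ C) (hb : b • x ∈ C) (hc : c ∈ uIcc a b) : c • x ∈ C := by
  have hline : Convex ℝ ((fun r : ℝ => r • x) ⁻¹' C) :=
    hC.linear_preimage (LinearMap.smulRight LinearMap.id x)
  exact (convex_iff_ordConnected.1 hline).uIcc_subset ha hb hc

theorem neg_inv_smul_mem_of_subset_neg_smul {Q : Set E} {lam : ℝ} (hlam : lam ≠ 0)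
    (hQlam : Q ⊆ (-lam) • Q) {x : E} (hx : x ∈ Q) : (-lam⁻¹) • x ∈ Q := by
  simpa [inv_neg] using (mem_smul_set_iff_inv_smul_mem₀ (neg_ne_zero.2 hlam) Q x).1 (hQlam hx)

variable [TopologicalSpace E] [IsTopologicalAddGroup E] [ContinuousSMul ℝ E]

theorem Convex.zero_mem_interior_of_subset_neg_smul {Q : Set E} (hQ : Convex ℝ Q)
    (hQint : (interior Q).Nonempty) {lam : ℝ} (hlam : 0 < lam) (hQlam : Q ⊆ (-lam) • Q) :
    (0 : E) ∈ interior Q := by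
  obtain ⟨a, ha⟩ := hQint
  have hneg : (-lam⁻¹) • a ∈ Q :=
    neg_inv_smul_mem_of_subset_neg_smul hlam.ne' hQlam (interior_subset ha)
  -- `0` splits the segment from `a` to `-a/λ` in the ratio `1 : λ`
  have hzero : (1 + lam)⁻¹ • a + (lam * (1 + lam)⁻¹) • ((-lam⁻¹) • a) = 0 := by
    rw [smul_smul, ← add_smul]
    field_simp
    simp
  rw [← hzero]
  exact hQ.combo_interior_self_mem_interior ha hneg (by positivity) (by positivity)
    (by field_simp)

theorem Convex.smul_mem_interior_of_zero_mem_interior {Q : Set E} (hQ : Convex ℝ Q)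
    (h0 : (0 : E) ∈ interior Q) {x : E} (hx : x ∈ Q) {t : ℝ} (ht₀ : 0 ≤ t) (ht₁ : t < 1) :
    t • x ∈ interior Q := by
  simpa using hQ.combo_interior_self_mem_interior h0 hx (sub_pos.2 ht₁) ht₀ (sub_add_cancel 1 t)

theorem Convex.one_le_of_smul_mem_frontier {Q : Set E} (hQ : Convex ℝ Q)
    (h0 : (0 : E) ∈ interior Q) {x : E} (hx : x ∈ Q) {t : ℝ} (ht : 0 ≤ t)
    (hfr : t • x ∈ frontier Q) : 1 ≤ t :=
  not_lt.1 fun ht₁ => hfr.2 (hQ.smul_mem_interior_of_zero_mem_interior h0 hx ht ht₁)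

end Convex

theorem stmt_18_general (d : ℕ) (lam : ℝ) (hlam : 0 < lam)
    (Q : Set (EuclideanSpace ℝ (Fin d)))
    (hQconv : Convex ℝ Q)
    (hQint : (interior Q).Nonempty)
    (hQlam : Q ⊆ (-lam) • Q)
    -- `S = convexHull ℝ (Set.range p)` is a maximal-volume simplex contained in `Q`
    (p : Fin (d + 1) → EuclideanSpace ℝ (Fin d))
    (hSQ : convexHull ℝ (Set.range p) ⊆ Q)
    (v : EuclideanSpace ℝ (Fin d)) (hv : v = Finset.univ.centroid ℝ p)
    (Q' : Set (EuclideanSpace ℝ (Fin d)))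
    (hvert : Set.range p ⊆ convexHull ℝ Q')
    -- `y` is a boundary point of `Q` on the ray from the origin in direction `-v`
    (y : EuclideanSpace ℝ (Fin d)) (hy : y ∈ frontier Q)
    (hray : ∃ t : ℝ, 0 ≤ t ∧ y = t • (-v))
    (hyQ' : y ∈ convexHull ℝ Q') :
    v ∈ (-lam) • convexHull ℝ Q' := by
  obtain ⟨t, ht, rfl⟩ := hray
  have hvS : v ∈ convexHull ℝ (range p) := by
    simpa [hv] using Finset.univ.centroid_mem_convexHull_image (R := ℝ) Finset.univ_nonempty p
  have hvQ' : v ∈ convexHull ℝ Q' := (convex_convexHull ℝ Q').convexHull_subset_iff.2 hvert hvS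
  have h0 := hQconv.zero_mem_interior_of_subset_neg_smul hQint hlam hQlam
  have hw : (-lam⁻¹) • v ∈ Q := neg_inv_smul_mem_of_subset_neg_smul hlam.ne' hQlam (hSQ hvS)
  have hlamt : 1 ≤ lam * t := by
    refine hQconv.one_le_of_smul_mem_frontier h0 hw (by positivity) ?_
    convert hy using 1
    rw [smul_smul, smul_neg, ← neg_smul]
    field_simp
  rw [mem_smul_set_iff_inv_smul_mem₀ (neg_ne_zero.2 hlam.ne'), inv_neg]
  refine (convex_convexHull ℝ Q').smul_mem_of_mem_uIcc (a := 1) (b := -t) (by rwa [one_smul])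
    (by rwa [neg_smul, ← smul_neg]) ?_
  rw [uIcc_of_ge (by linarith)]
  refine ⟨neg_le_neg ?_, by linarith [inv_pos.2 hlam]⟩
  rwa [inv_le_iff_one_le_mul₀' hlam]

theorem stmt_18 (d : ℕ) (lam : ℝ) (hlam : 0 < lam)
    (Q : Set (EuclideanSpace ℝ (Fin d)))
    (hQcompact : IsCompact Q) (hQconv : Convex ℝ Q)
    (hQint : (interior Q).Nonempty)
    (h0Q : (0 : EuclideanSpace ℝ (Fin d)) ∈ Q)
    (hQlam : Q ⊆ (-lam) • Q)
    -- `S = convexHull ℝ (Set.range p)` is a maximal-volume simplex contained in `Q`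
    (p : Fin (d + 1) → EuclideanSpace ℝ (Fin d))
    (hp : AffineIndependent ℝ p)
    (hSQ : convexHull ℝ (Set.range p) ⊆ Q)
    (hmax : ∀ q : Fin (d + 1) → EuclideanSpace ℝ (Fin d), AffineIndependent ℝ q →
      convexHull ℝ (Set.range q) ⊆ Q →
      volume (convexHull ℝ (Set.range q)) ≤ volume (convexHull ℝ (Set.range p)))
    (v : EuclideanSpace ℝ (Fin d)) (hv : v = Finset.univ.centroid ℝ p)
    (Q' : Set (EuclideanSpace ℝ (Fin d))) (hQ' : Q' ⊆ Q.extremePoints ℝ)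
    (hvert : Set.range p ⊆ convexHull ℝ Q')
    -- `y` is a boundary point of `Q` on the ray from the origin in direction `-v`
    (y : EuclideanSpace ℝ (Fin d)) (hy : y ∈ frontier Q)
    (hray : ∃ t : ℝ, 0 ≤ t ∧ y = t • (-v))
    (hyQ' : y ∈ convexHull ℝ Q') :
    v ∈ (-lam) • convexHull ℝ Q' :=
  stmt_18_general d lam hlam Q hQconv hQint hQlam p hSQ v hv Q' hvert y hy hray hyQ'
end

section
/- Let S be a d-dimensional simplex in ℝ^d with centroid v, assume v ≠ 0, let q be the intersection of the ray from v in direction v with the boundary of S, lying in a facet F of S, and let w be the centroid of the simplex conv({v} ∪ F). Then the ray emanating from the origin in direction w intersects F. -/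
open Set Pointwise

theorem stmt_19 (d : ℕ) (p : Fin (d + 1) → EuclideanSpace ℝ (Fin d))
    (hp : AffineIndependent ℝ p)
    (v : EuclideanSpace ℝ (Fin d)) (hv : v = Finset.univ.centroid ℝ p)
    (hv0 : v ≠ 0)
    -- `q` is the point where the ray `{t • v : t ≥ 1}` exits `S`
    (q : EuclideanSpace ℝ (Fin d))
    (hq : q ∈ frontier (convexHull ℝ (Set.range p)))
    (hqray : ∃ t : ℝ, 1 ≤ t ∧ q = t • v)
    -- `F` is a facet of `S` containing `q`
    (j : Fin (d + 1))
    (F : Set (EuclideanSpace ℝ (Fin d)))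
    (hF : F = convexHull ℝ (p '' {i | i ≠ j}))
    (hqF : q ∈ F)
    -- `w` is the centroid of the simplex `conv({v} ∪ F)`
    (w : EuclideanSpace ℝ (Fin d))
    (hw : w = ((d : ℝ) + 1)⁻¹ • (v + ∑ i ∈ Finset.univ.erase j, p i)) :
    ∃ t : ℝ, 0 ≤ t ∧ t • w ∈ F := by
  obtain ⟨t₀, ht₀, hq'⟩ := hqray
  have ht₀0 : (0:ℝ) < t₀ := lt_of_lt_of_le one_pos ht₀
  set s : ℝ := t₀⁻¹ with hs
  have hs0 : 0 < s := inv_pos.mpr ht₀0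
  have hvq : v = s • q := by
    rw [hq', smul_smul, hs, inv_mul_cancel₀ ht₀0.ne', one_smul]
  set c : ℝ := s + d with hc
  have hc0 : 0 < c := by positivity
  refine ⟨((d:ℝ) + 1) / c, by positivity, ?_⟩
  have hFc : Convex ℝ F := hF ▸ convex_convexHull ℝ _
  have hmem : ∀ i ∈ Finset.univ.erase j, p i ∈ F := by
    intro i hi
    rw [hF]
    exact subset_convexHull ℝ _ ⟨i, (Finset.mem_erase.mp hi).1, rfl⟩
  have hcard : (Finset.univ.erase j).card = d := by
    simp [Finset.card_erase_of_mem]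
  have key : ∑ i : Fin (d+1), (if i = j then s / c else 1 / c) • (if i = j then q else p i) ∈ F := by
    apply hFc.sum_mem
    · intro i _; split_ifs <;> positivity
    · rw [← Finset.add_sum_erase _ _ (Finset.mem_univ j)]
      rw [if_pos rfl, Finset.sum_congr rfl
        (fun i hi => if_neg (Finset.mem_erase.mp hi).1)]
      rw [Finset.sum_const, hcard, nsmul_eq_mul]
      field_simp
      exact hc.symm
    · intro i _
      split_ifs with h
      · exact hqF
      · exact hmem i (Finset.mem_erase.mpr ⟨h, Finset.mem_univ i⟩)
  convert key using 1
  rw [← Finset.add_sum_erase _ _ (Finset.mem_univ j), if_pos rfl, if_pos rfl,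
    Finset.sum_congr rfl (fun i hi => by
      rw [if_neg (Finset.mem_erase.mp hi).1, if_neg (Finset.mem_erase.mp hi).1])]
  rw [hw, hvq, smul_smul, div_mul_eq_mul_div, mul_inv_cancel₀ (by positivity : ((d:ℝ)+1) ≠ 0),
    smul_add, smul_smul, ← Finset.smul_sum,
    Finset.smul_sum]
  rw [one_div, inv_mul_eq_div]
end
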